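/- Under the same hypotheses (a, x₁, x₃, b nonzero, b²a(a−1) + b x₁x₃(a−1) + a x₁²x₃² = 0), the 3×3 matrix r̂ with rows (a, x₁, b), (x₃(a−1)/b, (x₁x₃+b)/b, x₃), (x₁²x₃²/b³, −x₁(ab+x₁x₃)/(ab²), −x₁x₃/(ab)) has eigenvalues 1 (with multiplicity 2) and λ₂ = −(x₁x₃/b)², i.e. its characteristic polynomial is (t−1)²(t−λ₂). -/

import Mathlib

open Matrix Polynomial

noncomputable section

/-- The 3×3 central block of the generic ACC solution. -/
def rhat (a x1 x3 b : ℂ) : Matrix (Fin 3) (Fin 3) ℂ :=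
  !![a, x1, b;
     x3 * (a - 1) / b, (x1 * x3 + b) / b, x3;
     x1 ^ 2 * x3 ^ 2 / b ^ 3, -(x1 * (a * b + x1 * x3)) / (a * b ^ 2), -(x1 * x3) / (a * b)]

/-!
The characteristic polynomial of a 3×3 matrix is `X³ - tr·X² + I₂·X - det`, where `I₂` is the
sum of the principal 2×2 minors. For `r̂` the determinant equals `λ₂` identically, while the
constraint on `a, x₁, x₃, b` is exactly what makes `tr = 2 + λ₂` and `I₂ = 1 + 2λ₂`, the
elementary symmetric functions of the eigenvalues `1, 1, λ₂`.
-/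

namespace Matrix

variable {R : Type*} [CommRing R]

def secondInvariant (M : Matrix (Fin 3) (Fin 3) R) : R :=
  M 0 0 * M 1 1 - M 0 1 * M 1 0 + M 0 0 * M 2 2 - M 0 2 * M 2 0 + M 1 1 * M 2 2 - M 1 2 * M 2 1

theorem charpoly_fin_three (M : Matrix (Fin 3) (Fin 3) R) :
    M.charpoly = X ^ 3 - C M.trace * X ^ 2 + C M.secondInvariant * X - C M.det := by
  simp only [charpoly, det_fin_three, charmatrix_apply, trace_fin_three, secondInvariant]
  simp [Fin.ext_iff]
  ring

end Matrix

section Rhat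

variable {a x1 x3 b : ℂ}

theorem trace_rhat (ha : a ≠ 0) (hb : b ≠ 0)
    (hcon : b ^ 2 * a * (a - 1) + b * x1 * x3 * (a - 1) + a * x1 ^ 2 * x3 ^ 2 = 0) :
    (rhat a x1 x3 b).trace = 2 + -(x1 * x3 / b) ^ 2 := by
  simp [rhat, trace_fin_three]
  field_simp
  linear_combination hcon

theorem secondInvariant_rhat (ha : a ≠ 0) (hb : b ≠ 0)
    (hcon : b ^ 2 * a * (a - 1) + b * x1 * x3 * (a - 1) + a * x1 ^ 2 * x3 ^ 2 = 0) :
    (rhat a x1 x3 b).secondInvariant = 1 + 2 * -(x1 * x3 / b) ^ 2 := by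
  simp [rhat, secondInvariant]
  field_simp
  linear_combination hcon

theorem det_rhat (ha : a ≠ 0) (hb : b ≠ 0) : (rhat a x1 x3 b).det = -(x1 * x3 / b) ^ 2 := by
  simp [rhat, det_fin_three]
  field_simp
  ring

end Rhat

theorem generic_block_charpoly (a x1 x3 b : ℂ) (ha : a ≠ 0)
    (hb : b ≠ 0)
    (hcon : b ^ 2 * a * (a - 1) + b * x1 * x3 * (a - 1) + a * x1 ^ 2 * x3 ^ 2 = 0) :
    (rhat a x1 x3 b).charpoly = (X - C 1) ^ 2 * (X - C (-(x1 * x3 / b) ^ 2)) := by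
  rw [charpoly_fin_three, trace_rhat ha hb hcon, secondInvariant_rhat ha hb hcon, det_rhat ha hb]
  simp only [map_add, map_mul, map_one, map_ofNat]
  ring
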